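/- Let X be a complex Banach space, let P be an L-projection on X** with range i_X(X), and let Y be a closed subspace of X such that P maps Y^{⊥⊥} onto i_X(Y). Then the quotient X/Y is L-embedded: the canonical image of X/Y in (X/Y)** is the range of an L-projection on (X/Y)**. -/

import Mathlib

/-!
Let `π : X → X ⧸ Y` be the quotient map and `T = π** : X** → (X ⧸ Y)**`. Since `π*` is an
isometric embedding, `T` is a metric surjection: it does not increase norms, and by Hahn–Banach
every `Φ` has a preimage `Ψ` with `‖Ψ‖ ≤ ‖Φ‖`. The kernel of `T` lies in `Y^⊥⊥`, which `P` maps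
into `i_X(Y) ⊆ ker T`, so `P` descends to a projection `Q` with `Q ∘ T = T ∘ P`. Computing the
L-decomposition of a preimage of `Φ` of no larger norm shows that `Q` is an L-projection, and
`range Q = T (i_X X) = i_{X/Y} (X ⧸ Y)`.
-/

open NormedSpace

noncomputable section

def ctranspose {E F : Type*} [SeminormedAddCommGroup E] [NormedSpace ℂ E]
    [SeminormedAddCommGroup F] [NormedSpace ℂ F] (f : E →L[ℂ] F) :
    StrongDual ℂ F →L[ℂ] StrongDual ℂ E :=
  (ContinuousLinearMap.compL ℂ E F ℂ).flip f

def IsLProjection {Z : Type*} [SeminormedAddCommGroup Z] [NormedSpace ℂ Z]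
    (P : Z →L[ℂ] Z) : Prop :=
  (∀ z, P (P z) = P z) ∧ ∀ z, ‖z‖ = ‖P z‖ + ‖z - P z‖

theorem LinearMap.exists_comp_eq_of_surjective_of_ker_le {R M N N' : Type*} [Ring R]
    [AddCommGroup M] [Module R M] [AddCommGroup N] [Module R N] [AddCommGroup N'] [Module R N']
    {f : M →ₗ[R] N} (hf : Function.Surjective f) {g : M →ₗ[R] N'} (hker : ker f ≤ ker g) :
    ∃ h : N →ₗ[R] N', h ∘ₗ f = g :=
  ⟨(ker f).liftQ g hker ∘ₗ (f.quotKerEquivOfSurjective hf).symm.toLinearMap, by ext; simp⟩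

theorem ContinuousLinearMap.exists_dual_comp_eq_norm_le {𝕜 G H : Type*} [RCLike 𝕜]
    [SeminormedAddCommGroup G] [NormedSpace 𝕜 G] [SeminormedAddCommGroup H] [NormedSpace 𝕜 H]
    (j : G →L[𝕜] H) (hj : ∀ x, ‖x‖ ≤ ‖j x‖) (φ : StrongDual 𝕜 G) :
    ∃ ψ : StrongDual 𝕜 H, ψ.comp j = φ ∧ ‖ψ‖ ≤ ‖φ‖ := by
  have hφ : ∀ x, ‖φ x‖ ≤ ‖φ‖ * ‖j x‖ := fun x =>
    (φ.le_opNorm x).trans (mul_le_mul_of_nonneg_left (hj x) (norm_nonneg φ))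
  obtain ⟨h, hh⟩ := LinearMap.exists_comp_eq_of_surjective_of_ker_le
    (LinearMap.surjective_rangeRestrict (j : G →ₗ[𝕜] H)) (g := (φ : G →ₗ[𝕜] 𝕜)) fun x hx => by
      have hjx : j x = 0 := congrArg Subtype.val hx
      simpa [hjx] using hφ x
  have hh' : ∀ x, h ((j : G →ₗ[𝕜] H).rangeRestrict x) = φ x := LinearMap.congr_fun hh
  have h_le : ∀ y, ‖h y‖ ≤ ‖φ‖ * ‖y‖ := by
    rintro ⟨_, x, rfl⟩
    exact (hh' x).symm ▸ hφ x
  obtain ⟨ψ, hψ, hψ_norm⟩ := exists_extension_norm_eq _ (h.mkContinuous ‖φ‖ h_le)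
  refine ⟨ψ, ContinuousLinearMap.ext fun x => (hψ _).trans (hh' x), hψ_norm.trans_le ?_⟩
  exact LinearMap.mkContinuous_norm_le _ (norm_nonneg φ) h_le

section Quotient

variable {𝕜 X F : Type*} [RCLike 𝕜] [SeminormedAddCommGroup X] [NormedSpace 𝕜 X]
  [SeminormedAddCommGroup F] [NormedSpace 𝕜 F] (Y : Submodule 𝕜 X)

theorem Submodule.norm_comp_mkQL (g : X ⧸ Y →L[𝕜] F) : ‖g.comp Y.mkQL‖ = ‖g‖ := by
  refine le_antisymm ?_ (g.opNorm_le_bound (norm_nonneg _) fun q => ?_)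
  · refine (g.comp Y.mkQL).opNorm_le_bound (norm_nonneg _) fun x => ?_
    exact (g.le_opNorm _).trans (by gcongr; exact Submodule.Quotient.norm_mk_le Y x)
  set C := ‖g.comp Y.mkQL‖
  have key : ∀ x : X, Submodule.Quotient.mk x = q → ‖g q‖ ≤ C * ‖x‖ := by
    rintro x rfl
    exact (g.comp Y.mkQL).le_opNorm x
  rcases (show 0 ≤ C from norm_nonneg _).eq_or_lt with hC | hC
  · obtain ⟨x, rfl⟩ := Submodule.Quotient.mk_surjective Y q
    calc ‖g _‖ ≤ C * ‖x‖ := key x rfl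
      _ = C * ‖Submodule.Quotient.mk x‖ := by rw [← hC, zero_mul, zero_mul]
  · rw [← div_le_iff₀' hC]
    exact QuotientAddGroup.le_norm_iff.2 fun x hx => (div_le_iff₀' hC).2 (key x hx)

theorem Submodule.apply_eq_zero_of_forall_apply_comp_mkQL_eq_zero
    {Ψ : StrongDual 𝕜 (StrongDual 𝕜 X)} (hΨ : ∀ g : StrongDual 𝕜 (X ⧸ Y), Ψ (g.comp Y.mkQL) = 0)
    (f : StrongDual 𝕜 X) (hf : ∀ y ∈ Y, f y = 0) : Ψ f = 0 :=
  hΨ (Y.liftQL f hf)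

end Quotient

section LProjection

variable {E F : Type*} [SeminormedAddCommGroup E] [NormedSpace ℂ E]
  [SeminormedAddCommGroup F] [NormedSpace ℂ F]

theorem IsLProjection.norm_apply_le {P : E →L[ℂ] E} (hP : IsLProjection P) (z : E) :
    ‖P z‖ ≤ ‖z‖ := by
  linarith [hP.2 z, norm_nonneg (z - P z)]

theorem IsLProjection.exists_descent {P : E →L[ℂ] E} (hP : IsLProjection P) {T : E →L[ℂ] F}
    (hT : ∀ x, ‖T x‖ ≤ ‖x‖) (hlift : ∀ y, ∃ x, T x = y ∧ ‖x‖ ≤ ‖y‖)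
    (hker : ∀ x, T x = 0 → T (P x) = 0) :
    ∃ Q : F →L[ℂ] F, IsLProjection Q ∧ Set.range Q = T '' Set.range P := by
  have hsurj : Function.Surjective T := fun y => (hlift y).imp fun _ h => h.1
  obtain ⟨Q, hQ⟩ := LinearMap.exists_comp_eq_of_surjective_of_ker_le (R := ℂ) hsurj
    (g := (T ∘L P : E →ₗ[ℂ] F)) hker
  have hQT : ∀ x, Q (T x) = T (P x) := LinearMap.congr_fun hQ
  have hQ_le : ∀ y, ‖Q y‖ ≤ 1 * ‖y‖ := by
    intro y
    obtain ⟨x, rfl, hx⟩ := hlift y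
    rw [hQT, one_mul]
    exact (hT _).trans ((hP.norm_apply_le x).trans hx)
  refine ⟨Q.mkContinuous 1 hQ_le, ⟨fun y => ?_, fun y => ?_⟩, ?_⟩
  · obtain ⟨x, rfl⟩ := hsurj y
    simp only [LinearMap.mkContinuous_apply, hQT, hP.1]
  · obtain ⟨x, rfl, hx⟩ := hlift y
    simp only [LinearMap.mkContinuous_apply, hQT]
    refine le_antisymm ((norm_add_le _ _).trans_eq' (by rw [add_sub_cancel])) ?_
    calc ‖T (P x)‖ + ‖T x - T (P x)‖ = ‖T (P x)‖ + ‖T (x - P x)‖ := by rw [map_sub]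
      _ ≤ ‖P x‖ + ‖x - P x‖ := add_le_add (hT _) (hT _)
      _ = ‖x‖ := (hP.2 x).symm
      _ ≤ ‖T x‖ := hx
  · calc Set.range (Q.mkContinuous 1 hQ_le) = Set.range (Q ∘ T) := (hsurj.range_comp Q).symm
      _ = Set.range (T ∘ P) := congrArg Set.range (funext hQT)
      _ = T '' Set.range P := Set.range_comp T P

end LProjection

section Transpose

variable {E F : Type*} [SeminormedAddCommGroup E] [NormedSpace ℂ E]
  [SeminormedAddCommGroup F] [NormedSpace ℂ F]

theorem norm_ctranspose_apply_le {f : E →L[ℂ] F} (hf : ∀ x, ‖f x‖ ≤ ‖x‖)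
    (g : StrongDual ℂ F) : ‖ctranspose f g‖ ≤ ‖g‖ :=
  (g.opNorm_comp_le f).trans <| mul_le_of_le_one_right (norm_nonneg g) <|
    f.opNorm_le_bound zero_le_one fun x => (hf x).trans_eq (one_mul _).symm

theorem ctranspose_ctranspose_inclusionInDoubleDual (f : E →L[ℂ] F) (x : E) :
    ctranspose (ctranspose f) (inclusionInDoubleDual ℂ E x) = inclusionInDoubleDual ℂ F (f x) :=
  rfl

end Transpose

theorem quotient_by_Lsubspace_is_Lembedded_general
    (X : Type*) [NormedAddCommGroup X] [NormedSpace ℂ X]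
    (P : StrongDual ℂ (StrongDual ℂ X) →L[ℂ] StrongDual ℂ (StrongDual ℂ X))
    (hP : IsLProjection (Z := StrongDual ℂ (StrongDual ℂ X)) P)
    (hrange : Set.range P = Set.range (inclusionInDoubleDual ℂ X))
    (Y : Subspace ℂ X)
    (hPY : P '' {Ψ : StrongDual ℂ (StrongDual ℂ X) | ∀ f : StrongDual ℂ X, (∀ y ∈ Y, f y = 0) → Ψ f = 0}
        = inclusionInDoubleDual ℂ X '' (Y : Set X)) :
    ∃ Q : StrongDual ℂ (StrongDual ℂ (X ⧸ Y)) →L[ℂ] StrongDual ℂ (StrongDual ℂ (X ⧸ Y)),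
      @IsLProjection _ (ContinuousLinearMap.toSeminormedAddCommGroup (E := StrongDual ℂ (X ⧸ Y))
        (F := ℂ) (σ₁₂ := RingHom.id ℂ)) (ContinuousLinearMap.toNormedSpace
        (E := StrongDual ℂ (X ⧸ Y)) (F := ℂ) (σ₁₂ := RingHom.id ℂ) (𝕜' := ℂ)) Q ∧
      Set.range Q = Set.range (inclusionInDoubleDual ℂ (X ⧸ Y)) := by
  -- Instance search does not find the operator norm on the bidual of a quotient.
  let := ContinuousLinearMap.toSeminormedAddCommGroup (E := StrongDual ℂ (X ⧸ Y)) (F := ℂ)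
    (σ₁₂ := RingHom.id ℂ)
  let := ContinuousLinearMap.toNormedSpace (E := StrongDual ℂ (X ⧸ Y)) (F := ℂ)
    (σ₁₂ := RingHom.id ℂ) (𝕜' := ℂ)
  set j := ctranspose Y.mkQL
  have hj : ∀ g, ‖j g‖ = ‖g‖ := Y.norm_comp_mkQL
  have hker : ∀ Ψ, ctranspose j Ψ = 0 → ctranspose j (P Ψ) = 0 := by
    intro Ψ hΨ
    obtain ⟨y, hy, hPΨ⟩ : P Ψ ∈ inclusionInDoubleDual ℂ X '' Y :=
      hPY ▸ Set.mem_image_of_mem P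
        (Y.apply_eq_zero_of_forall_apply_comp_mkQL_eq_zero fun g => congrArg (· g) hΨ)
    rw [← hPΨ, ctranspose_ctranspose_inclusionInDoubleDual, Submodule.mkQL_apply,
      Submodule.mkQ_apply, (Submodule.Quotient.mk_eq_zero Y).2 hy, map_zero]
  obtain ⟨Q, hQ, hQrange⟩ := hP.exists_descent (T := ctranspose j)
    (norm_ctranspose_apply_le fun g => (hj g).le) (j.exists_dual_comp_eq_norm_le fun g => (hj g).ge)
    hker
  refine ⟨Q, hQ, ?_⟩
  calc Set.range Q = Set.range (ctranspose j ∘ inclusionInDoubleDual ℂ X) := by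
        rw [hQrange, hrange, Set.range_comp]
    _ = Set.range (inclusionInDoubleDual ℂ (X ⧸ Y) ∘ Y.mkQL) :=
        congrArg Set.range (funext (ctranspose_ctranspose_inclusionInDoubleDual Y.mkQL))
    _ = Set.range (inclusionInDoubleDual ℂ (X ⧸ Y)) := Y.mkQ_surjective.range_comp _

/-- Let `P` be an L-projection on `X**` with range `i_X(X)` and let `Y` be a
closed subspace of `X` such that `P` maps `Y^{⊥⊥}` onto `i_X(Y)`. Then the quotient `X/Y` is
L-embedded: its canonical image in `(X/Y)**` is the range of an L-projection. -/
theorem quotient_by_Lsubspace_is_Lembedded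
    (X : Type*) [NormedAddCommGroup X] [NormedSpace ℂ X] [CompleteSpace X]
    (P : StrongDual ℂ (StrongDual ℂ X) →L[ℂ] StrongDual ℂ (StrongDual ℂ X))
    (hP : IsLProjection (Z := StrongDual ℂ (StrongDual ℂ X)) P)
    (hrange : Set.range P = Set.range (inclusionInDoubleDual ℂ X))
    (Y : Subspace ℂ X) [IsClosed (Y : Set X)]
    (hPY : P '' {Ψ : StrongDual ℂ (StrongDual ℂ X) | ∀ f : StrongDual ℂ X, (∀ y ∈ Y, f y = 0) → Ψ f = 0}
        = inclusionInDoubleDual ℂ X '' (Y : Set X)) :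
    ∃ Q : StrongDual ℂ (StrongDual ℂ (X ⧸ Y)) →L[ℂ] StrongDual ℂ (StrongDual ℂ (X ⧸ Y)),
      @IsLProjection _ (ContinuousLinearMap.toSeminormedAddCommGroup (E := StrongDual ℂ (X ⧸ Y))
        (F := ℂ) (σ₁₂ := RingHom.id ℂ)) (ContinuousLinearMap.toNormedSpace
        (E := StrongDual ℂ (X ⧸ Y)) (F := ℂ) (σ₁₂ := RingHom.id ℂ) (𝕜' := ℂ)) Q ∧
      Set.range Q = Set.range (inclusionInDoubleDual ℂ (X ⧸ Y)) :=
  quotient_by_Lsubspace_is_Lembedded_general X P hP hrange Y hPY
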